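/- There exists a constant C > 0 such that for all ε ∈ (0,1): P(D₁ ≤ ε) ≤ C · ε. -/

import Mathlib

open MeasureTheory ProbabilityTheory Real Filter

/-- Density of the Beta distribution `β(u,v)` with respect to Lebesgue measure. -/
noncomputable def betaPDFReal (u v x : ℝ) : ℝ :=
  if 0 < x ∧ x < 1 then
    Real.Gamma (u + v) / (Real.Gamma u * Real.Gamma v) * x ^ (u - 1) * (1 - x) ^ (v - 1)
  else 0

/-- The Beta distribution `β(u,v)` on `ℝ`. -/
noncomputable def betaMeasure (u v : ℝ) : Measure ℝ :=
  volume.withDensity fun x => ENNReal.ofReal (_root_.betaPDFReal u v x)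

/-- Density of the generalized Gamma distribution `GG(u,v)` w.r.t. Lebesgue measure. -/
noncomputable def genGammaPDFReal (u v x : ℝ) : ℝ :=
  if 0 < x then v / Real.Gamma (u / v) * x ^ (u - 1) * Real.exp (-(x ^ v)) else 0

/-- The generalized Gamma distribution `GG(u,v)` on `ℝ`. -/
noncomputable def genGammaMeasure (u v : ℝ) : Measure ℝ :=
  volume.withDensity fun x => ENNReal.ofReal (genGammaPDFReal u v x)

/-!
Write `W = B₂Z₃`. Conditionally on `W`, the event `B₁W ≤ ε` is `B₁ ≤ ε/W`, and the density of
`β(1,2)` is bounded, so `P(B₁W ≤ ε) ≤ c ε E[1/W]`. By independence `E[1/W] = E[1/B₂] E[1/Z₃]`,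
and each factor is finite because the densities of `β(3,1)` and `GG(5,2)` are `O(x)` at `0`.
-/

open Set
open scoped ENNReal

section WithDensity

variable {f : ℝ → ℝ}

theorem withDensity_Iic_zero (hf0 : ∀ x ≤ 0, f x = 0) :
    volume.withDensity (fun x => ENNReal.ofReal (f x)) (Iic 0) = 0 := by
  rw [withDensity_apply _ measurableSet_Iic]
  exact (setLIntegral_congr_fun measurableSet_Iic fun x hx => by simp [hf0 x hx]).trans
    lintegral_zero

theorem ae_pos_withDensity (hf0 : ∀ x ≤ 0, f x = 0) :
    ∀ᵐ x ∂volume.withDensity (fun x => ENNReal.ofReal (f x)), 0 < x := by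
  rw [ae_iff]
  simp only [not_lt]
  exact withDensity_Iic_zero hf0

theorem withDensity_Iic_le (hf0 : ∀ x ≤ 0, f x = 0) {M : ℝ} (hfM : ∀ x, f x ≤ M) {t : ℝ}
    (ht : 0 ≤ t) :
    volume.withDensity (fun x => ENNReal.ofReal (f x)) (Iic t) ≤
      ENNReal.ofReal M * ENNReal.ofReal t := by
  set ν := volume.withDensity fun x => ENNReal.ofReal (f x)
  calc ν (Iic t) ≤ ν (Iic 0) + ν (Ioc 0 t) := by
        rw [← Iic_union_Ioc_eq_Iic ht]; exact measure_union_le _ _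
    _ = ∫⁻ x in Ioc 0 t, ENNReal.ofReal (f x) := by
        rw [withDensity_Iic_zero hf0, zero_add, withDensity_apply _ measurableSet_Ioc]
    _ ≤ ∫⁻ _ in Ioc 0 t, ENNReal.ofReal M :=
        lintegral_mono fun x => ENNReal.ofReal_le_ofReal (hfM x)
    _ = ENNReal.ofReal M * ENNReal.ofReal t := by simp [Real.volume_Ioc]

theorem lintegral_inv_withDensity_le (hf : Measurable f) {M : ℝ}
    (hfM : ∀ x ∈ Ioo 0 1, f x ≤ M * x) :
    ∫⁻ x, ENNReal.ofReal x⁻¹ ∂volume.withDensity (fun x => ENNReal.ofReal (f x)) ≤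
      ENNReal.ofReal M + volume.withDensity (fun x => ENNReal.ofReal (f x)) univ := by
  set ν := volume.withDensity fun x => ENNReal.ofReal (f x)
  have hsplit : ∀ x : ℝ,
      ENNReal.ofReal x⁻¹ ≤ (Ioo 0 1).indicator (fun x => ENNReal.ofReal x⁻¹) x + 1 := by
    intro x
    by_cases hx : x ∈ Ioo 0 1
    · simp [indicator_of_mem hx]
    · rw [indicator_of_notMem hx, zero_add, ENNReal.ofReal_le_one]
      rcases le_or_gt x 0 with hx0 | hx0
      · exact (inv_nonpos.2 hx0).trans zero_le_one
      · exact inv_le_one_of_one_le₀ (not_lt.1 fun h => hx ⟨hx0, h⟩)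
  calc ∫⁻ x, ENNReal.ofReal x⁻¹ ∂ν
      ≤ ∫⁻ x, (Ioo 0 1).indicator (fun x => ENNReal.ofReal x⁻¹) x + 1 ∂ν := lintegral_mono hsplit
    _ = (∫⁻ x in Ioo 0 1, ENNReal.ofReal (f x) * ENNReal.ofReal x⁻¹) + ν univ := by
        rw [lintegral_add_right _ measurable_const, lintegral_indicator measurableSet_Ioo,
          lintegral_one, setLIntegral_withDensity_eq_setLIntegral_mul _ hf.ennreal_ofReal
            (by fun_prop) measurableSet_Ioo]
        rfl
    _ ≤ (∫⁻ _ in Ioo (0 : ℝ) 1, ENNReal.ofReal M) + ν univ := by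
        gcongr ?_ + _
        refine setLIntegral_mono measurable_const fun x hx => ?_
        rw [← ENNReal.ofReal_mul' (inv_nonneg.2 hx.1.le), ← div_eq_mul_inv]
        exact ENNReal.ofReal_le_ofReal ((div_le_iff₀ hx.1).2 (hfM x hx))
    _ = ENNReal.ofReal M + ν univ := by simp [Real.volume_Ioo]

end WithDensity

theorem MeasureTheory.Measure.prod_setOf_mul_le_le {μ ν : Measure ℝ} [SFinite μ] [SFinite ν]
    {C : ℝ≥0∞} (hμ : ∀ t, 0 ≤ t → μ (Iic t) ≤ C * ENNReal.ofReal t) (hν : ∀ᵐ y ∂ν, 0 < y) {ε : ℝ}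
    (hε : 0 ≤ ε) :
    μ.prod ν {p | p.1 * p.2 ≤ ε} ≤ C * ENNReal.ofReal ε * ∫⁻ y, ENNReal.ofReal y⁻¹ ∂ν := by
  rw [Measure.prod_apply_symm (measurableSet_le (by fun_prop) measurable_const),
    ← lintegral_const_mul _ (by fun_prop)]
  refine lintegral_mono_ae (hν.mono fun y hy => ?_)
  have hslice : (fun x => (x, y)) ⁻¹' {p : ℝ × ℝ | p.1 * p.2 ≤ ε} = Iic (ε * y⁻¹) := by
    ext x; simp [← div_eq_mul_inv, le_div_iff₀ hy]
  rw [hslice, mul_assoc, ← ENNReal.ofReal_mul hε]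
  exact hμ _ (mul_nonneg hε (inv_nonneg.2 hy.le))

section RandomVariables

variable {Ω : Type*} [MeasurableSpace Ω] {P : Measure Ω}

theorem ae_pos_of_map_eq_withDensity {X : Ω → ℝ} (hX : Measurable X) {f : ℝ → ℝ}
    (hlaw : P.map X = volume.withDensity fun x => ENNReal.ofReal (f x))
    (hf0 : ∀ x ≤ 0, f x = 0) : ∀ᵐ ω ∂P, 0 < X ω :=
  (ae_map_iff hX.aemeasurable measurableSet_Ioi).1 (hlaw ▸ ae_pos_withDensity hf0)

theorem lintegral_inv_lt_top_of_map_eq_withDensity [IsProbabilityMeasure P] {X : Ω → ℝ}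
    (hX : Measurable X) {f : ℝ → ℝ}
    (hlaw : P.map X = volume.withDensity fun x => ENNReal.ofReal (f x)) (hf : Measurable f)
    {M : ℝ} (hfM : ∀ x ∈ Ioo 0 1, f x ≤ M * x) :
    ∫⁻ ω, ENNReal.ofReal (X ω)⁻¹ ∂P < ∞ := by
  have := Measure.isProbabilityMeasure_map (μ := P) hX.aemeasurable
  have hbound := lintegral_inv_withDensity_le hf hfM
  rw [← hlaw, measure_univ, lintegral_map (by fun_prop) hX] at hbound
  exact hbound.trans_lt (ENNReal.add_lt_top.2 ⟨ENNReal.ofReal_lt_top, ENNReal.one_lt_top⟩)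

theorem measure_mul_le_le_of_indepFun [IsFiniteMeasure P] {X Y : Ω → ℝ} (hX : Measurable X)
    (hY : Measurable Y) (hXY : IndepFun X Y P) {C : ℝ≥0∞}
    (hXtail : ∀ t, 0 ≤ t → P.map X (Iic t) ≤ C * ENNReal.ofReal t) (hYpos : ∀ᵐ ω ∂P, 0 < Y ω)
    {ε : ℝ} (hε : 0 ≤ ε) :
    P {ω | X ω * Y ω ≤ ε} ≤ C * ENNReal.ofReal ε * ∫⁻ ω, ENNReal.ofReal (Y ω)⁻¹ ∂P := by
  have hs : MeasurableSet {p : ℝ × ℝ | p.1 * p.2 ≤ ε} :=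
    measurableSet_le (by fun_prop) measurable_const
  calc P {ω | X ω * Y ω ≤ ε} = P.map (fun ω => (X ω, Y ω)) {p | p.1 * p.2 ≤ ε} :=
        (Measure.map_apply (hX.prodMk hY) hs).symm
    _ = (P.map X).prod (P.map Y) {p | p.1 * p.2 ≤ ε} := by
        rw [(indepFun_iff_map_prod_eq_prod_map_map hX.aemeasurable hY.aemeasurable).1 hXY]
    _ ≤ C * ENNReal.ofReal ε * ∫⁻ y, ENNReal.ofReal y⁻¹ ∂P.map Y :=
        Measure.prod_setOf_mul_le_le hXtail
          ((ae_map_iff hY.aemeasurable measurableSet_Ioi).2 hYpos) hε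
    _ = C * ENNReal.ofReal ε * ∫⁻ ω, ENNReal.ofReal (Y ω)⁻¹ ∂P := by
        rw [lintegral_map (by fun_prop) hY]

theorem lintegral_inv_mul_eq_of_indepFun {Y Z : Ω → ℝ} (hY : Measurable Y) (hZ : Measurable Z)
    (hYZ : IndepFun Y Z P) (hY0 : ∀ᵐ ω ∂P, 0 ≤ Y ω) :
    ∫⁻ ω, ENNReal.ofReal (Y ω * Z ω)⁻¹ ∂P =
      (∫⁻ ω, ENNReal.ofReal (Y ω)⁻¹ ∂P) * ∫⁻ ω, ENNReal.ofReal (Z ω)⁻¹ ∂P := by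
  have hinv : Measurable fun y : ℝ => ENNReal.ofReal y⁻¹ := by fun_prop
  refine (lintegral_congr_ae (hY0.mono fun ω hω => ?_)).trans
    (lintegral_mul_eq_lintegral_mul_lintegral_of_indepFun (hinv.comp hY) (hinv.comp hZ)
      (hYZ.comp hinv hinv))
  simp only [Pi.mul_apply, mul_inv, ENNReal.ofReal_mul (inv_nonneg.2 hω)]

end RandomVariables

section BetaGammaDensities

variable {u v x : ℝ}

theorem betaPDFReal_of_nonpos (hx : x ≤ 0) : _root_.betaPDFReal u v x = 0 :=
  if_neg fun h => hx.not_gt h.1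

theorem genGammaPDFReal_of_nonpos (hx : x ≤ 0) : genGammaPDFReal u v x = 0 :=
  if_neg hx.not_gt

theorem measurable_betaPDFReal : Measurable (_root_.betaPDFReal u v) :=
  Measurable.ite (measurableSet_Ioi.inter measurableSet_Iio) (by fun_prop) measurable_const

theorem measurable_genGammaPDFReal : Measurable (genGammaPDFReal u v) :=
  Measurable.ite measurableSet_Ioi (by fun_prop) measurable_const

theorem betaPDFReal_le (hu : 1 ≤ u) (hv : 1 ≤ v) (x : ℝ) :
    _root_.betaPDFReal u v x ≤ Gamma (u + v) / (Gamma u * Gamma v) := by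
  have hc : 0 ≤ Gamma (u + v) / (Gamma u * Gamma v) := by positivity
  unfold _root_.betaPDFReal
  split_ifs with hx
  · have h₁ : x ^ (u - 1) ≤ 1 := rpow_le_one hx.1.le hx.2.le (by linarith)
    have h₂ : (1 - x) ^ (v - 1) ≤ 1 :=
      rpow_le_one (by linarith [hx.2]) (by linarith [hx.1]) (by linarith)
    calc _ ≤ Gamma (u + v) / (Gamma u * Gamma v) * 1 * 1 := by
          gcongr; exact rpow_nonneg (by linarith [hx.2]) _
      _ = _ := by ring
  · exact hc

theorem betaPDFReal_le_mul_self (hu : 2 ≤ u) (hv : 1 ≤ v) (hx : x ∈ Ioo 0 1) :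
    _root_.betaPDFReal u v x ≤ Gamma (u + v) / (Gamma u * Gamma v) * x := by
  have hc : 0 ≤ Gamma (u + v) / (Gamma u * Gamma v) := by positivity
  have h₁ : x ^ (u - 1) ≤ x := by
    simpa using rpow_le_rpow_of_exponent_ge hx.1 hx.2.le (by linarith : (1 : ℝ) ≤ u - 1)
  have h₂ : (1 - x) ^ (v - 1) ≤ 1 :=
    rpow_le_one (by linarith [hx.2]) (by linarith [hx.1]) (by linarith)
  rw [_root_.betaPDFReal, if_pos (show 0 < x ∧ x < 1 from hx)]
  calc _ ≤ Gamma (u + v) / (Gamma u * Gamma v) * x * 1 :=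
        mul_le_mul (mul_le_mul_of_nonneg_left h₁ hc) h₂ (rpow_nonneg (by linarith [hx.2]) _)
          (mul_nonneg hc hx.1.le)
    _ = _ := mul_one _

theorem genGammaPDFReal_le_mul_self (hu : 2 ≤ u) (hv : 0 < v) (hx : x ∈ Ioo 0 1) :
    genGammaPDFReal u v x ≤ v / Gamma (u / v) * x := by
  have hc : 0 ≤ v / Gamma (u / v) := by positivity
  have h₁ : x ^ (u - 1) ≤ x := by
    simpa using rpow_le_rpow_of_exponent_ge hx.1 hx.2.le (by linarith : (1 : ℝ) ≤ u - 1)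
  have h₂ : exp (-x ^ v) ≤ 1 := exp_le_one_iff.2 (neg_nonpos.2 (rpow_nonneg hx.1.le _))
  rw [genGammaPDFReal, if_pos hx.1]
  calc _ ≤ v / Gamma (u / v) * x * 1 := by gcongr; exact mul_nonneg hc hx.1.le
    _ = _ := mul_one _

end BetaGammaDensities

/-- There is `C > 0` such that for all `ε ∈ (0,1)`, `P(D₁ ≤ ε) ≤ C * ε`,
where `D₁ = B₁B₂Z₃`. -/
theorem adam_bound {Ω : Type*} [MeasurableSpace Ω] (P : Measure Ω) [IsProbabilityMeasure P]
    (B₁ B₂ Z₃ : Ω → ℝ) (hB₁ : Measurable B₁) (hB₂ : Measurable B₂) (hZ₃ : Measurable Z₃)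
    (hindep : iIndepFun ![B₁, B₂, Z₃] P)
    (hlaw₁ : P.map B₁ = _root_.betaMeasure 1 2)
    (hlaw₂ : P.map B₂ = _root_.betaMeasure 3 1)
    (hlaw₃ : P.map Z₃ = genGammaMeasure 5 2) :
    ∃ C : ℝ, 0 < C ∧ ∀ ε : ℝ, 0 < ε → ε < 1 →
      P {ω | B₁ ω * B₂ ω * Z₃ ω ≤ ε} ≤ ENNReal.ofReal (C * ε) := by
  have hmeas : ∀ i, Measurable (![B₁, B₂, Z₃] i) := fun i => by fin_cases i <;> assumption
  have hB₂pos := ae_pos_of_map_eq_withDensity hB₂ hlaw₂ fun _ => betaPDFReal_of_nonpos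
  have hZ₃pos := ae_pos_of_map_eq_withDensity hZ₃ hlaw₃ fun _ => genGammaPDFReal_of_nonpos
  set A := ENNReal.ofReal (Gamma (1 + 2) / (Gamma 1 * Gamma 2)) *
    ((∫⁻ ω, ENNReal.ofReal (B₂ ω)⁻¹ ∂P) * ∫⁻ ω, ENNReal.ofReal (Z₃ ω)⁻¹ ∂P)
  have hA : A ≠ ∞ := ENNReal.mul_ne_top ENNReal.ofReal_ne_top <| ENNReal.mul_ne_top
    (lintegral_inv_lt_top_of_map_eq_withDensity hB₂ hlaw₂ measurable_betaPDFReal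
      fun _ => betaPDFReal_le_mul_self (by norm_num) le_rfl).ne
    (lintegral_inv_lt_top_of_map_eq_withDensity hZ₃ hlaw₃ measurable_genGammaPDFReal
      fun _ => genGammaPDFReal_le_mul_self (by norm_num) two_pos).ne
  have hbound : ∀ ε, 0 ≤ ε → P {ω | B₁ ω * B₂ ω * Z₃ ω ≤ ε} ≤ A * ENNReal.ofReal ε := by
    intro ε hε
    have hB₁W : IndepFun B₁ (fun ω => B₂ ω * Z₃ ω) P :=
      ((hindep.indepFun_prodMk hmeas 1 2 0 (by decide) (by decide)).comp
        (measurable_fst.mul measurable_snd) measurable_id).symm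
    have hB₂Z₃ : IndepFun B₂ Z₃ P := hindep.indepFun (by decide : (1 : Fin 3) ≠ 2)
    calc P {ω | B₁ ω * B₂ ω * Z₃ ω ≤ ε} = P {ω | B₁ ω * (B₂ ω * Z₃ ω) ≤ ε} := by
          simp_rw [mul_assoc]
      _ ≤ _ := measure_mul_le_le_of_indepFun (Y := fun ω => B₂ ω * Z₃ ω) hB₁ (hB₂.mul hZ₃)
          hB₁W
          (fun t ht => by
            rw [hlaw₁]
            exact withDensity_Iic_le (fun _ => betaPDFReal_of_nonpos)
              (betaPDFReal_le le_rfl one_le_two) ht)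
          (hB₂pos.and hZ₃pos |>.mono fun ω h => mul_pos h.1 h.2) hε
      _ = A * ENNReal.ofReal ε := by
          rw [lintegral_inv_mul_eq_of_indepFun hB₂ hZ₃ hB₂Z₃ (hB₂pos.mono fun _ h => h.le)]
          ring
  refine ⟨A.toReal + 1, by positivity, fun ε hε _ => (hbound ε hε.le).trans ?_⟩
  calc A * ENNReal.ofReal ε = ENNReal.ofReal (A.toReal * ε) := by
        rw [ENNReal.ofReal_mul ENNReal.toReal_nonneg, ENNReal.ofReal_toReal hA]
    _ ≤ ENNReal.ofReal ((A.toReal + 1) * ε) := ENNReal.ofReal_le_ofReal (by nlinarith)
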